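/- Let q \ge 3 and d \le e, and let s = b_{h_{max}}(i,j) where h_{max} = min(j, d-i) and b_h(i,j) = h(d+e-i-h) + (d-j)(j-h) + \binom{j-h}{2}. Then for all 0 \le i \le d and 1 \le j \le d, (1/4) q^s < |B_j(i)| < 2 q^s. -/

import Mathlib

/-- The Gaussian binomial coefficient `[m choose l]_q = ∏_{t=1}^{l} (q^{m-t+1}-1)/(q^t-1)`. -/
def gaussBinom (q : ℚ) (m l : ℕ) : ℚ :=
  ∏ t ∈ Finset.range l, (q ^ (m - t) - 1) / (q ^ (t + 1) - 1)

/-- The `h`-th term of the eigenvalue expression for the bilinear forms graph `H_q(d,e,j)`: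
`T_h(i,j) = (-1)^{j-h} q^{eh + C(j-h,2)} [d-h, d-j]_q [d-i, h]_q`. -/
def bilinT (q : ℚ) (d e j i h : ℕ) : ℚ :=
  (-1 : ℚ) ^ (j - h) * q ^ (e * h + (j - h).choose 2) *
    gaussBinom q (d - h) (d - j) * gaussBinom q (d - i) h

/-- The eigenvalue `B_j(i)` of the bilinear forms graph `H_q(d,e,j)`. -/
def bilinB (q : ℚ) (d e j i : ℕ) : ℚ :=
  ∑ h ∈ Finset.range (min j (d - i) + 1), bilinT q d e j i h

/-- The exponent `s = b_{h_max}(i,j)` where `b_h(i,j) = h(d+e-i-h) + (d-j)(j-h) + C(j-h,2)`. -/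
def bilinS (d e i j : ℕ) : ℕ :=
  min j (d - i) * (d + e - i - min j (d - i)) + (d - j) * (j - min j (d - i)) +
    (j - min j (d - i)).choose 2

/-!
Write `A_h > 0` for the absolute value of the `h`-th term, so that
`B_j(i) = ±(A_H - A_{H-1} + A_{H-2} - ⋯)` with `H = min(j, d-i)`. By the two Gaussian binomial
recurrences, `A_h / A_{h+1}` is at most `(9/4) q^{i+h-e} ≤ 3/4` (this is where `d ≤ e` and `q ≥ 3`
enter), so the terms increase and the alternating sum lies between `A_H - A_{H-1} > A_H / 4` and
`A_H`. Finally `q^s ≤ A_H < 2 q^s`: at `h = H` one of the two Gaussian binomials is `1`, and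
`q^{l(m-l)} ≤ [m, l]_q < 2 q^{l(m-l)}` for `q ≥ 3` since `∏_t (1 - q^{-t}) > 1/2`.
-/

open Finset

section OrderedField
variable {K : Type*} [Field K] [LinearOrder K] [IsStrictOrderedRing K]

lemma two_thirds_mul_pow_le_pow_sub_one {q : K} (hq : 3 ≤ q) {n : ℕ} (hn : n ≠ 0) :
    2 / 3 * q ^ n ≤ q ^ n - 1 := by
  have : q ≤ q ^ n := le_self_pow₀ (by linarith) hn
  linarith

lemma pow_mul_sub_one_mul_sub_one_lt {q : K} (hq : 3 ≤ q) {a e u v y : ℕ} (hy : y ≠ 0)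
    (huv : u + v ≤ e + y) :
    q ^ a * ((q ^ u - 1) * (q ^ v - 1)) < 3 / 4 * (q ^ e * ((q ^ (a + 1) - 1) * (q ^ y - 1))) := by
  have hq1 : 1 < q := by linarith
  have hu : 0 ≤ q ^ u - 1 := sub_nonneg.2 (one_le_pow₀ hq1.le)
  have hprod : (q ^ u - 1) * (q ^ v - 1) < q ^ (e + y) := calc
    (q ^ u - 1) * (q ^ v - 1) ≤ (q ^ u - 1) * q ^ v := mul_le_mul_of_nonneg_left (by linarith) hu
    _ < q ^ u * q ^ v := by gcongr; linarith
    _ ≤ q ^ (e + y) := by rw [← pow_add]; exact pow_le_pow_right₀ hq1.le huv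
  have ha := two_thirds_mul_pow_le_pow_sub_one hq (Nat.add_one_ne_zero a)
  have hy' := two_thirds_mul_pow_le_pow_sub_one hq hy
  calc q ^ a * ((q ^ u - 1) * (q ^ v - 1))
      < q ^ a * q ^ (e + y) := by gcongr
    _ ≤ 3 / 4 * (q ^ e * ((2 / 3 * q ^ (a + 1)) * (2 / 3 * q ^ y))) := by
      have : 0 ≤ q ^ a * q ^ e * q ^ y := by positivity
      rw [pow_add, pow_succ]; nlinarith
    _ ≤ 3 / 4 * (q ^ e * ((q ^ (a + 1) - 1) * (q ^ y - 1))) := by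
      have : 0 ≤ 2 / 3 * q ^ (a + 1) := by positivity
      gcongr 3 / 4 * (q ^ e * ?_)
      exact mul_le_mul ha hy' (by positivity) (by linarith)

lemma one_add_pow_div_two_le_prod_one_sub_pow {r : K} (hr0 : 0 ≤ r) (hr : 3 * r ≤ 1) (l : ℕ) :
    (1 + r ^ l) / 2 ≤ ∏ t ∈ range l, (1 - r ^ (t + 1)) := by
  induction l with
  | zero => norm_num
  | succ l ih =>
    have hx0 : 0 ≤ r ^ l := pow_nonneg hr0 l
    have hx1 : r ^ l ≤ 1 := pow_le_one₀ hr0 (by linarith)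
    have hfac : 0 ≤ 1 - r ^ (l + 1) := by rw [pow_succ]; nlinarith
    rw [prod_range_succ]
    calc (1 + r ^ (l + 1)) / 2 ≤ (1 + r ^ l) / 2 * (1 - r ^ (l + 1)) := by
          rw [pow_succ]; nlinarith [mul_nonneg hx0 (sub_nonneg.2 hx1)]
      _ ≤ _ := by gcongr

lemma half_lt_prod_one_sub_pow {r : K} (hr0 : 0 < r) (hr : 3 * r ≤ 1) (l : ℕ) :
    1 / 2 < ∏ t ∈ range l, (1 - r ^ (t + 1)) := by
  have := one_add_pow_div_two_le_prod_one_sub_pow hr0.le hr l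
  have : 0 < r ^ l := pow_pos hr0 l
  linarith

end OrderedField

section GaussBinom
variable {q : ℚ} {m l : ℕ}

lemma gaussBinom_eq_prod_pow_add (hlm : l ≤ m) :
    gaussBinom q m l = ∏ t ∈ range l, (q ^ (m - l + (t + 1)) - 1) / (q ^ (t + 1) - 1) := by
  rw [gaussBinom, prod_div_distrib, prod_div_distrib, ← prod_range_reflect]
  congr 1
  refine prod_congr rfl fun t ht => ?_
  rw [mem_range] at ht
  congr 2
  omega

lemma pow_le_pow_add_sub_one_div (hq : 1 < q) (n : ℕ) {k : ℕ} (hk : k ≠ 0) :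
    q ^ n ≤ (q ^ (n + k) - 1) / (q ^ k - 1) := by
  have hk1 : 0 < q ^ k - 1 := sub_pos.2 (one_lt_pow₀ hq hk)
  rw [le_div_iff₀ hk1, pow_add]
  nlinarith [one_le_pow₀ (n := n) hq.le]

lemma pow_add_sub_one_div_mul_le (hq : 1 < q) (n : ℕ) {k : ℕ} (hk : k ≠ 0) :
    (q ^ (n + k) - 1) / (q ^ k - 1) * (1 - q⁻¹ ^ k) ≤ q ^ n := by
  have hk1 : 0 < q ^ k - 1 := sub_pos.2 (one_lt_pow₀ hq hk)
  have hqk : 0 < q ^ k := by positivity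
  have : (q ^ (n + k) - 1) / (q ^ k - 1) * (1 - q⁻¹ ^ k) = (q ^ (n + k) - 1) / q ^ k := by
    rw [inv_pow]; field_simp
  rw [this, div_le_iff₀ hqk, pow_add]
  linarith

lemma pow_le_gaussBinom (hq : 1 < q) (hlm : l ≤ m) : q ^ (l * (m - l)) ≤ gaussBinom q m l := by
  rw [gaussBinom_eq_prod_pow_add hlm, pow_mul', ← card_range l, ← prod_const, card_range]
  exact prod_le_prod (fun _ _ => by positivity)
    fun t _ => pow_le_pow_add_sub_one_div hq _ (Nat.add_one_ne_zero t)

lemma gaussBinom_pos (hq : 1 < q) (hlm : l ≤ m) : 0 < gaussBinom q m l :=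
  (pow_pos (by linarith) _).trans_le (pow_le_gaussBinom hq hlm)

lemma gaussBinom_lt_two_mul_pow (hq : 3 ≤ q) (hlm : l ≤ m) :
    gaussBinom q m l < 2 * q ^ (l * (m - l)) := by
  have hq1 : 1 < q := by linarith
  have hmul :
      gaussBinom q m l * ∏ t ∈ range l, (1 - q⁻¹ ^ (t + 1)) ≤ q ^ (l * (m - l)) := by
    rw [gaussBinom_eq_prod_pow_add hlm, ← prod_mul_distrib, pow_mul', ← card_range l,
      ← prod_const, card_range]
    refine prod_le_prod (fun t _ => ?_)
      fun t _ => pow_add_sub_one_div_mul_le hq1 _ (Nat.add_one_ne_zero t)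
    have := pow_le_pow_add_sub_one_div hq1 (m - l) (Nat.add_one_ne_zero t)
    have : q⁻¹ ^ (t + 1) ≤ 1 := pow_le_one₀ (by positivity) (inv_le_one_of_one_le₀ hq1.le)
    have : 0 ≤ q ^ (m - l) := by positivity
    exact mul_nonneg (by linarith) (by linarith)
  have hhalf := half_lt_prod_one_sub_pow (inv_pos.2 (by linarith : (0 : ℚ) < q))
    (by rw [← div_eq_mul_inv, div_le_one₀ (by linarith)]; exact hq) l
  have := mul_lt_mul_of_pos_left hhalf (gaussBinom_pos hq1 hlm)
  linarith

lemma gaussBinom_self (hq : 1 < q) (m : ℕ) : gaussBinom q m m = 1 := by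
  rw [gaussBinom_eq_prod_pow_add le_rfl, Nat.sub_self]
  refine prod_eq_one fun t _ => ?_
  rw [zero_add, div_self (sub_pos.2 (one_lt_pow₀ hq (Nat.add_one_ne_zero t))).ne']

lemma sub_one_mul_gaussBinom (q : ℚ) (m l : ℕ) :
    (q ^ (m - l) - 1) * gaussBinom q m l = (q ^ m - 1) * gaussBinom q (m - 1) l := by
  have hnum : (∏ t ∈ range l, (q ^ (m - t) - 1)) * (q ^ (m - l) - 1)
      = (q ^ m - 1) * ∏ t ∈ range l, (q ^ (m - 1 - t) - 1) := by
    rw [← prod_range_succ (fun t => q ^ (m - t) - 1), prod_range_succ', Nat.sub_zero, mul_comm]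
    congr 1
    exact prod_congr rfl fun t _ => by rw [Nat.sub_sub, Nat.add_comm 1 t]
  rw [gaussBinom, gaussBinom, prod_div_distrib, prod_div_distrib, ← mul_div_assoc,
    ← mul_div_assoc, mul_comm _ (∏ t ∈ range l, _), hnum]

lemma gaussBinom_succ_mul (h : q ^ (l + 1) ≠ 1) :
    gaussBinom q m (l + 1) * (q ^ (l + 1) - 1) = gaussBinom q m l * (q ^ (m - l) - 1) := by
  rw [gaussBinom, prod_range_succ, ← gaussBinom, mul_assoc, div_mul_cancel₀ _ (sub_ne_zero.2 h)]

end GaussBinom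

section AlternatingSum
variable {K : Type*}

def altSum [Ring K] (A : ℕ → K) (n : ℕ) : K :=
  ∑ h ∈ range (n + 1), (-1) ^ (n - h) * A h

lemma altSum_zero [Ring K] (A : ℕ → K) : altSum A 0 = A 0 := by
  simp [altSum]

lemma altSum_succ [Ring K] (A : ℕ → K) (n : ℕ) :
    altSum A (n + 1) = A (n + 1) - altSum A n := by
  rw [altSum, altSum, sum_range_succ, Nat.sub_self, pow_zero, one_mul, add_comm, sub_eq_add_neg,
    ← sum_neg_distrib]
  congr 1
  refine sum_congr rfl fun h hh => ?_
  rw [mem_range] at hh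
  rw [show n + 1 - h = n - h + 1 by omega, pow_succ, mul_neg_one, neg_mul]

variable [Field K] [LinearOrder K] [IsStrictOrderedRing K] {A : ℕ → K}

lemma altSum_nonneg_and_le {n : ℕ} (hA0 : 0 ≤ A 0) (hmono : ∀ h < n, A h ≤ A (h + 1)) :
    0 ≤ altSum A n ∧ altSum A n ≤ A n := by
  induction n with
  | zero => exact ⟨by rwa [altSum_zero], (altSum_zero A).le⟩
  | succ n ih =>
    obtain ⟨hS0, hSle⟩ := ih fun h hh => hmono h (by omega)
    have := hmono n (by omega)
    rw [altSum_succ]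
    constructor <;> linarith

lemma altSum_bounds_of_lt_mul {n : ℕ} {c : K} (hc0 : 0 < c) (hc1 : c ≤ 1)
    (hpos : ∀ h ≤ n, 0 < A h) (hrat : ∀ h < n, A h < c * A (h + 1)) :
    (1 - c) * A n < altSum A n ∧ altSum A n ≤ A n := by
  have hmono : ∀ h < n, A h ≤ A (h + 1) := fun h hh =>
    (hrat h hh).le.trans (mul_le_of_le_one_left (hpos _ (by omega)).le hc1)
  refine ⟨?_, (altSum_nonneg_and_le (hpos 0 (Nat.zero_le _)).le hmono).2⟩
  cases n with
  | zero =>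
    rw [altSum_zero]
    nlinarith [hpos 0 le_rfl]
  | succ n =>
    obtain ⟨-, hSle⟩ := altSum_nonneg_and_le (n := n) (hpos 0 (Nat.zero_le _)).le
      fun h hh => hmono h (by omega)
    rw [altSum_succ]
    linarith [hrat n (by omega)]

end AlternatingSum

section BilinearForms
variable {q : ℚ} {d e i j h : ℕ}

def bilinA (q : ℚ) (d e j i h : ℕ) : ℚ :=
  q ^ (e * h + (j - h).choose 2) * gaussBinom q (d - h) (d - j) * gaussBinom q (d - i) h

-- The paper's `b_h(i,j)`, with `h(d+e-i-h)` split as `eh + h(d-i-h)`.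
def bilinExp (d e i j h : ℕ) : ℕ :=
  e * h + (j - h).choose 2 + (d - j) * (j - h) + h * (d - i - h)

lemma bilinB_eq_neg_one_pow_mul_altSum (q : ℚ) (d e j i : ℕ) :
    bilinB q d e j i = (-1) ^ (j - min j (d - i)) * altSum (bilinA q d e j i) (min j (d - i)) := by
  rw [bilinB, altSum, mul_sum]
  refine sum_congr rfl fun h hh => ?_
  rw [mem_range] at hh
  rw [bilinT, bilinA, ← mul_assoc, ← pow_add,
    show j - min j (d - i) + (min j (d - i) - h) = j - h by omega]
  ring

lemma bilinS_eq_bilinExp (d e i j : ℕ) : bilinS d e i j = bilinExp d e i j (min j (d - i)) := by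
  rw [bilinS, bilinExp]
  rcases le_total i d with hid | hdi
  · rw [show d + e - i - min j (d - i) = e + (d - i - min j (d - i)) by omega]
    ring
  · simp [Nat.sub_eq_zero_of_le hdi, add_comm]

lemma pow_bilinExp_le_bilinA (hq : 1 < q) (hj : j ≤ d) (hhj : h ≤ j) (hhi : h ≤ d - i) :
    q ^ bilinExp d e i j h ≤ bilinA q d e j i h := by
  have g1 : q ^ ((d - j) * (j - h)) ≤ gaussBinom q (d - h) (d - j) := by
    have := pow_le_gaussBinom (q := q) hq (show d - j ≤ d - h by omega)
    rwa [show d - h - (d - j) = j - h by omega] at this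
  have g2 : q ^ (h * (d - i - h)) ≤ gaussBinom q (d - i) h := pow_le_gaussBinom hq hhi
  have hG1 : 0 < gaussBinom q (d - h) (d - j) := gaussBinom_pos hq (by omega)
  rw [bilinExp, pow_add, pow_add, bilinA]
  exact mul_le_mul (mul_le_mul_of_nonneg_left g1 (by positivity)) g2 (by positivity)
    (mul_nonneg (by positivity) hG1.le)

lemma bilinA_min_lt_two_mul_pow (hq : 3 ≤ q) (hj : j ≤ d) :
    bilinA q d e j i (min j (d - i)) < 2 * q ^ bilinExp d e i j (min j (d - i)) := by
  have hq1 : 1 < q := by linarith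
  rcases le_total j (d - i) with hji | hij
  · rw [min_eq_left hji, bilinA, bilinExp, Nat.sub_self, gaussBinom_self hq1]
    have := gaussBinom_lt_two_mul_pow hq hji
    simp only [Nat.choose_zero_succ, add_zero, mul_zero, mul_one]
    calc q ^ (e * j) * gaussBinom q (d - i) j < q ^ (e * j) * (2 * q ^ (j * (d - i - j))) :=
          mul_lt_mul_of_pos_left this (by positivity)
      _ = _ := by rw [pow_add]; ring
  · rw [min_eq_right hij, bilinA, bilinExp, Nat.sub_self, gaussBinom_self hq1]
    have := gaussBinom_lt_two_mul_pow hq (show d - j ≤ d - (d - i) by omega)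
    rw [show d - (d - i) - (d - j) = j - (d - i) by omega] at this
    simp only [add_zero, mul_zero, mul_one]
    calc _ < q ^ (e * (d - i) + (j - (d - i)).choose 2) * (2 * q ^ ((d - j) * (j - (d - i)))) :=
          mul_lt_mul_of_pos_left this (by positivity)
      _ = _ := by rw [pow_add _ (e * (d - i) + _)]; ring

lemma bilinA_mul_eq (hq : 1 < q) (hj : j ≤ d) (hhj : h < j) :
    bilinA q d e j i h * (q ^ e * ((q ^ (j - h) - 1) * (q ^ (d - i - h) - 1))) =
      bilinA q d e j i (h + 1) * (q ^ (j - (h + 1)) * ((q ^ (d - h) - 1) * (q ^ (h + 1) - 1))) := by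
  have R1 := sub_one_mul_gaussBinom q (d - h) (d - j)
  rw [show d - h - (d - j) = j - h by omega, show d - h - 1 = d - (h + 1) by omega] at R1
  have R2 := gaussBinom_succ_mul (m := d - i) (one_lt_pow₀ hq (Nat.add_one_ne_zero h)).ne'
  have hexp : q ^ (e * h + (j - h).choose 2) * q ^ e =
      q ^ (e * (h + 1) + (j - (h + 1)).choose 2) * q ^ (j - (h + 1)) := by
    rw [← pow_add, ← pow_add, show j - h = j - (h + 1) + 1 by omega, Nat.choose_succ_succ,
      Nat.choose_one_right]
    ring_nf
  rw [bilinA, bilinA]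
  linear_combination
    ((q ^ (j - h) - 1) * gaussBinom q (d - h) (d - j) * gaussBinom q (d - i) h *
      (q ^ (d - i - h) - 1)) * hexp +
    (q ^ (e * (h + 1) + (j - (h + 1)).choose 2) * q ^ (j - (h + 1)) * gaussBinom q (d - i) h *
      (q ^ (d - i - h) - 1)) * R1 -
    (q ^ (e * (h + 1) + (j - (h + 1)).choose 2) * q ^ (j - (h + 1)) * (q ^ (d - h) - 1) *
      gaussBinom q (d - (h + 1)) (d - j)) * R2

lemma bilinA_lt_three_quarters_mul_succ (hq : 3 ≤ q) (hde : d ≤ e) (hj : j ≤ d) (hhj : h < j)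
    (hhi : h < d - i) : bilinA q d e j i h < 3 / 4 * bilinA q d e j i (h + 1) := by
  have hq1 : 1 < q := by linarith
  have hcoef := pow_mul_sub_one_mul_sub_one_lt hq (a := j - (h + 1)) (u := d - h) (v := h + 1)
    (show d - i - h ≠ 0 by omega) (show d - h + (h + 1) ≤ e + (d - i - h) by omega)
  rw [show j - (h + 1) + 1 = j - h by omega] at hcoef
  have hC : 0 < q ^ e * ((q ^ (j - h) - 1) * (q ^ (d - i - h) - 1)) := by
    have := one_lt_pow₀ hq1 (show j - h ≠ 0 by omega)
    have := one_lt_pow₀ hq1 (show d - i - h ≠ 0 by omega)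
    exact mul_pos (by positivity) (mul_pos (by linarith) (by linarith))
  have hA : 0 < bilinA q d e j i (h + 1) :=
    (pow_pos (by linarith) _).trans_le (pow_bilinExp_le_bilinA hq1 hj hhj (by omega))
  refine lt_of_mul_lt_mul_right ?_ hC.le
  calc bilinA q d e j i h * (q ^ e * ((q ^ (j - h) - 1) * (q ^ (d - i - h) - 1)))
      = bilinA q d e j i (h + 1) * (q ^ (j - (h + 1)) * ((q ^ (d - h) - 1) * (q ^ (h + 1) - 1))) :=
        bilinA_mul_eq hq1 hj hhj
    _ < bilinA q d e j i (h + 1) *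
          (3 / 4 * (q ^ e * ((q ^ (j - h) - 1) * (q ^ (d - i - h) - 1)))) :=
        mul_lt_mul_of_pos_left hcoef hA
    _ = _ := by ring

end BilinearForms

theorem bilinB_bounds_general (q d e i j : ℕ) (hq : 3 ≤ q) (hde : d ≤ e)
    (hj2 : j ≤ d) :
    (1 / 4 : ℚ) * (q : ℚ) ^ bilinS d e i j < |bilinB (q : ℚ) d e j i| ∧
    |bilinB (q : ℚ) d e j i| < 2 * (q : ℚ) ^ bilinS d e i j := by
  have hq3 : (3 : ℚ) ≤ q := by exact_mod_cast hq
  have hq1 : (1 : ℚ) < q := by linarith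
  have hpos : ∀ h ≤ min j (d - i), 0 < bilinA q d e j i h := fun h hh =>
    (pow_pos (by linarith) _).trans_le (pow_bilinExp_le_bilinA hq1 hj2 (by omega) (by omega))
  obtain ⟨hlow, hup⟩ :=
    altSum_bounds_of_lt_mul (by norm_num : (0 : ℚ) < 3 / 4) (by norm_num) hpos
      fun h hh => bilinA_lt_three_quarters_mul_succ hq3 hde hj2 (by omega) (by omega)
  have habs : |bilinB q d e j i| = altSum (bilinA q d e j i) (min j (d - i)) := by
    rw [bilinB_eq_neg_one_pow_mul_altSum, abs_mul, abs_pow, abs_neg, abs_one, one_pow, one_mul,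
      abs_of_pos (by linarith [hpos _ le_rfl])]
  have hAlow := pow_bilinExp_le_bilinA (e := e) hq1 hj2 (min_le_left j (d - i)) (min_le_right j _)
  have hAup := bilinA_min_lt_two_mul_pow (e := e) (i := i) hq3 hj2
  rw [habs, bilinS_eq_bilinExp]
  constructor <;> linarith

theorem bilinB_bounds (q d e i j : ℕ) (hq : 3 ≤ q) (hde : d ≤ e)
    (hi : i ≤ d) (hj1 : 1 ≤ j) (hj2 : j ≤ d) :
    (1 / 4 : ℚ) * (q : ℚ) ^ bilinS d e i j < |bilinB (q : ℚ) d e j i| ∧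
    |bilinB (q : ℚ) d e j i| < 2 * (q : ℚ) ^ bilinS d e i j :=
  bilinB_bounds_general q d e i j hq hde hj2
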